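/- Suppose there exist functions φ_L, φ_U : 𝒳 × 𝒴 → ℝ such that φ_L(x,y) ≤ P(X=x | Y=y, S=s) / P(X=x | S=s) ≤ φ_U(x,y) for all x ∈ 𝒳, y ∈ 𝒴, s ∈ 𝒮, and set Δ(x,y) = φ_U(x,y) − φ_L(x,y). Fix s_max ∈ 𝒮 and define the conditional distribution Q̃(ŷ | x, s) := P(Y=ŷ | X=x, S=s_max), and let Q̃_Ŷ(ŷ) = ∑_{x,s} P(X=x, S=s) Q̃(ŷ | x, s) be the induced marginal distribution of Ŷ. Then: TV(P_{Y|S=s_max}, Q̃_Ŷ) ≤ E_{x∼P_X, y∼P_{Y|S=s_max}}[ Δ(x, y) ], where the expectation is under the product of the marginal of X and the conditional of Y given S=s_max. -/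

import Mathlib

/-!
Write `r(x, y, s) = P(x | y, s) / P(x | s)`. Bayes' rule gives `P(y | s) r(x, y, s) = P(y | x, s)`,
and `∑ₓ P(x, s) r(x, y, s) = P(s)`. Hence
`P(y | s_max) - Q̃_Ŷ(y) = ∑_{x,s} P(x, s) P(y | s_max) (r(x, y, s) - r(x, y, s_max))`,
and each difference of ratios lies in `[-Δ(x, y), Δ(x, y)]` because both ratios lie in
`[φ_L(x, y), φ_U(x, y)]`. Summing `P(x, s)` over `s` leaves `P(x)`.
-/

open Finset

noncomputable section

variable {𝒳 𝒴 𝒮 : Type*} [Fintype 𝒳] [Fintype 𝒴] [Fintype 𝒮]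

/-- Total variation distance between two finitely supported distributions on `𝒴`,
`TV(p, q) = (1/2) ∑ y, |p y - q y|`. -/
def TV (p q : 𝒴 → ℝ) : ℝ := (1 / 2) * ∑ y, |p y - q y|

/-- Marginal distribution of `(X, S)` under the joint `P` of `(X, Y, S)`. -/
def margXS (P : 𝒳 → 𝒴 → 𝒮 → ℝ) (x : 𝒳) (s : 𝒮) : ℝ := ∑ y, P x y s

/-- Marginal distribution of `(Y, S)`. -/
def margYS (P : 𝒳 → 𝒴 → 𝒮 → ℝ) (y : 𝒴) (s : 𝒮) : ℝ := ∑ x, P x y s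

/-- Marginal distribution of `S`. -/
def margS (P : 𝒳 → 𝒴 → 𝒮 → ℝ) (s : 𝒮) : ℝ := ∑ x, margXS P x s

/-- Marginal distribution of `X`. -/
def margX (P : 𝒳 → 𝒴 → 𝒮 → ℝ) (x : 𝒳) : ℝ := ∑ s, margXS P x s

/-- Conditional distribution of `Y` given `X = x, S = s`. -/
def condYXS (P : 𝒳 → 𝒴 → 𝒮 → ℝ) (x : 𝒳) (s : 𝒮) (y : 𝒴) : ℝ := P x y s / margXS P x s

/-- Conditional distribution of `Y` given `S = s`. -/
def condYS (P : 𝒳 → 𝒴 → 𝒮 → ℝ) (s : 𝒮) (y : 𝒴) : ℝ := margYS P y s / margS P s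

/-- The ratio `P(X=x | Y=y, S=s) / P(X=x | S=s)`. -/
def condRatio (P : 𝒳 → 𝒴 → 𝒮 → ℝ) (x : 𝒳) (y : 𝒴) (s : 𝒮) : ℝ :=
  (P x y s / margYS P y s) / (margXS P x s / margS P s)

/-- A conditional distribution `Q`: for every `(x, s)`, `Q x s` is a probability
distribution on labels. -/
def IsRule (Q : 𝒳 → 𝒮 → 𝒴 → ℝ) : Prop :=
  (∀ x s y, 0 ≤ Q x s y) ∧ ∀ x s, ∑ y, Q x s y = 1

/-- The generalized objective: `E_{(x,s)∼P_{X,S}}[TV(Q_{Ŷ|X=x,S=s}, P_{Y|X=x,S=s})]`. -/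
def objective (P : 𝒳 → 𝒴 → 𝒮 → ℝ) (Q : 𝒳 → 𝒮 → 𝒴 → ℝ) : ℝ :=
  ∑ x, ∑ s, margXS P x s * TV (Q x s) (condYXS P x s)

/-- Joint distribution of `(Ŷ, S)` induced by `Q · P_{X,S}`. -/
def jointYhatS (P : 𝒳 → 𝒴 → 𝒮 → ℝ) (Q : 𝒳 → 𝒮 → 𝒴 → ℝ) (yh : 𝒴) (s : 𝒮) : ℝ :=
  ∑ x, margXS P x s * Q x s yh

/-- Marginal distribution of the prediction `Ŷ`. -/
def margYhat (P : 𝒳 → 𝒴 → 𝒮 → ℝ) (Q : 𝒳 → 𝒮 → 𝒴 → ℝ) (yh : 𝒴) : ℝ :=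
  ∑ s, jointYhatS P Q yh s

/-- Conditional distribution of the prediction `Ŷ` given `S = s`. -/
def condYhatS (P : 𝒳 → 𝒴 → 𝒮 → ℝ) (Q : 𝒳 → 𝒮 → 𝒴 → ℝ) (s : 𝒮) (yh : 𝒴) : ℝ :=
  jointYhatS P Q yh s / margS P s

/-- The conditional distribution `Q̃(ŷ | x, s) := P(Y=ŷ | X=x, S=s_max)`. -/
def Qtilde (P : 𝒳 → 𝒴 → 𝒮 → ℝ) (smax : 𝒮) (x : 𝒳) (s : 𝒮) (yh : 𝒴) : ℝ :=
  condYXS P x smax yh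

/-- Marginal distribution of the prediction `Ŷ` induced by `Q̃`:
`Q̃_Ŷ(ŷ) = ∑_{x,s} P(X=x, S=s) Q̃(ŷ|x,s)`. -/
def QtildeMarg (P : 𝒳 → 𝒴 → 𝒮 → ℝ) (smax : 𝒮) (yh : 𝒴) : ℝ :=
  ∑ x, ∑ s, margXS P x s * Qtilde P smax x s yh

end

variable {𝒳 𝒴 𝒮 : Type*} [Fintype 𝒳] [Fintype 𝒴]

theorem TV_le_sum_of_abs_sub_le {p q b : 𝒴 → ℝ} (h : ∀ y, |p y - q y| ≤ b y) :
    TV p q ≤ ∑ y, b y := by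
  have hsum : ∑ y, |p y - q y| ≤ ∑ y, b y := sum_le_sum fun y _ => h y
  have hnonneg : 0 ≤ ∑ y, |p y - q y| := sum_nonneg fun y _ => abs_nonneg _
  rw [TV]
  linarith

section Bayes

variable {P : 𝒳 → 𝒴 → 𝒮 → ℝ}

theorem margS_pos [Nonempty 𝒳] (hXS : ∀ x s, 0 < margXS P x s) (s : 𝒮) : 0 < margS P s :=
  sum_pos (fun x _ => hXS x s) univ_nonempty

theorem margXS_mul_condRatio {x : 𝒳} {s : 𝒮} (hxs : margXS P x s ≠ 0) (y : 𝒴) :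
    margXS P x s * condRatio P x y s = margS P s * (P x y s / margYS P y s) := by
  unfold condRatio
  field_simp

theorem sum_margXS_mul_condRatio {s : 𝒮} (hXS : ∀ x, margXS P x s ≠ 0) {y : 𝒴}
    (hys : margYS P y s ≠ 0) : ∑ x, margXS P x s * condRatio P x y s = margS P s := by
  simp only [margXS_mul_condRatio (hXS _), ← mul_sum, ← sum_div]
  rw [← margYS, div_self hys, mul_one]

theorem condYS_mul_condRatio {x : 𝒳} {y : 𝒴} {s : 𝒮} (hxs : margXS P x s ≠ 0)
    (hys : margYS P y s ≠ 0) (hs : margS P s ≠ 0) :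
    condYS P s y * condRatio P x y s = condYXS P x s y := by
  unfold condYS condRatio condYXS
  field_simp

end Bayes

variable [Fintype 𝒮]

theorem sum_margS (P : 𝒳 → 𝒴 → 𝒮 → ℝ) : ∑ s, margS P s = ∑ x, ∑ y, ∑ s, P x y s := by
  simp only [margS, margXS]
  rw [sum_comm]
  exact sum_congr rfl fun x _ => sum_comm

theorem condYS_sub_QtildeMarg {P : 𝒳 → 𝒴 → 𝒮 → ℝ} (hP1 : ∑ x, ∑ y, ∑ s, P x y s = 1)
    (hXS : ∀ x s, margXS P x s ≠ 0) (hYS : ∀ y s, margYS P y s ≠ 0)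
    (hS : ∀ s, margS P s ≠ 0) (smax : 𝒮) (y : 𝒴) :
    condYS P smax y - QtildeMarg P smax y =
      ∑ x, ∑ s, margXS P x s * condYS P smax y *
        (condRatio P x y s - condRatio P x y smax) := by
  have hratio : ∑ x, ∑ s, margXS P x s * condYS P smax y * condRatio P x y s
      = condYS P smax y := by
    simp only [mul_right_comm _ (condYS P smax y), ← sum_mul]
    rw [sum_comm]
    simp only [sum_margXS_mul_condRatio (hXS · _) (hYS y _)]
    rw [sum_margS, hP1, one_mul]
  have hbayes : ∑ x, ∑ s, margXS P x s * condYS P smax y * condRatio P x y smax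
      = QtildeMarg P smax y := by
    simp only [mul_assoc, condYS_mul_condRatio (hXS _ smax) (hYS y smax) (hS smax)]
    rfl
  simp only [mul_sub, sum_sub_distrib, hratio, hbayes]

theorem abs_condYS_sub_QtildeMarg_le {P : 𝒳 → 𝒴 → 𝒮 → ℝ}
    (hP1 : ∑ x, ∑ y, ∑ s, P x y s = 1) (hXS : ∀ x s, 0 < margXS P x s)
    (hYS : ∀ y s, 0 < margYS P y s) {φL φU : 𝒳 → 𝒴 → ℝ}
    (hL : ∀ x y s, φL x y ≤ condRatio P x y s) (hU : ∀ x y s, condRatio P x y s ≤ φU x y)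
    (smax : 𝒮) (y : 𝒴) :
    |condYS P smax y - QtildeMarg P smax y|
      ≤ ∑ x, margX P x * condYS P smax y * (φU x y - φL x y) := by
  have : Nonempty 𝒳 := by
    by_contra h
    simp [not_nonempty_iff.mp h] at hP1
  have hS := margS_pos hXS
  have hweight : ∀ x s, 0 ≤ margXS P x s * condYS P smax y := fun x s =>
    mul_nonneg (hXS x s).le (div_pos (hYS y smax) (hS smax)).le
  have hratio : ∀ x s, |condRatio P x y s - condRatio P x y smax| ≤ φU x y - φL x y :=
    fun x s => abs_sub_le_iff.mpr
      ⟨by linarith [hU x y s, hL x y smax], by linarith [hU x y smax, hL x y s]⟩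
  rw [condYS_sub_QtildeMarg hP1 (fun x s => (hXS x s).ne') (fun y s => (hYS y s).ne')
    (fun s => (hS s).ne')]
  calc _ ≤ ∑ x, ∑ s, |margXS P x s * condYS P smax y *
            (condRatio P x y s - condRatio P x y smax)| :=
        (abs_sum_le_sum_abs _ _).trans (sum_le_sum fun x _ => abs_sum_le_sum_abs _ _)
    _ ≤ ∑ x, ∑ s, margXS P x s * condYS P smax y * (φU x y - φL x y) := by
        gcongr with x _ s _
        rw [abs_mul, abs_of_nonneg (hweight x s)]
        exact mul_le_mul_of_nonneg_left (hratio x s) (hweight x s)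
    _ = ∑ x, margX P x * condYS P smax y * (φU x y - φL x y) := by
        simp only [margX, sum_mul]

theorem qtilde_marginal_tv_bound_general
    (P : 𝒳 → 𝒴 → 𝒮 → ℝ)
    (hP1 : ∑ x, ∑ y, ∑ s, P x y s = 1)
    (hXS : ∀ x s, 0 < margXS P x s)
    (hYS : ∀ y s, 0 < margYS P y s)
    (φL φU : 𝒳 → 𝒴 → ℝ)
    (hL : ∀ x y s, φL x y ≤ condRatio P x y s)
    (hU : ∀ x y s, condRatio P x y s ≤ φU x y)
    (smax : 𝒮) :
    TV (condYS P smax) (QtildeMarg P smax)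
      ≤ ∑ x, ∑ y, margX P x * condYS P smax y * (φU x y - φL x y) := by
  rw [sum_comm]
  exact TV_le_sum_of_abs_sub_le (abs_condYS_sub_QtildeMarg_le hP1 hXS hYS hL hU smax)

/-- If `φ_L(x,y) ≤ P(x|y,s)/P(x|s) ≤ φ_U(x,y)` and `Δ = φ_U - φ_L`, then
`TV(P_{Y|S=s_max}, Q̃_Ŷ) ≤ E_{x∼P_X, y∼P_{Y|S=s_max}}[Δ(x, y)]`. -/
theorem qtilde_marginal_tv_bound
    (P : 𝒳 → 𝒴 → 𝒮 → ℝ)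
    (hP0 : ∀ x y s, 0 ≤ P x y s)
    (hP1 : ∑ x, ∑ y, ∑ s, P x y s = 1)
    (hXS : ∀ x s, 0 < margXS P x s)
    (hYS : ∀ y s, 0 < margYS P y s)
    (φL φU : 𝒳 → 𝒴 → ℝ)
    (hL : ∀ x y s, φL x y ≤ condRatio P x y s)
    (hU : ∀ x y s, condRatio P x y s ≤ φU x y)
    (smax : 𝒮) :
    TV (condYS P smax) (QtildeMarg P smax)
      ≤ ∑ x, ∑ y, margX P x * condYS P smax y * (φU x y - φL x y) :=
  qtilde_marginal_tv_bound_general P hP1 hXS hYS φL φU hL hU smax
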